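/- Let s ∈ ℝ and let a, b, f, h be unit quaternions with re(b) = 0 and re(h) = 0. Set p = exp(s · im(b*h)) and q = exp(s · im(f*a⁻¹*h)). Then re(h * a⁻¹ * h * q⁻¹ * p⁻¹) = −re(p⁻¹ * a * f⁻¹ * q * f) and re(a⁻¹ * h * q⁻¹ * p⁻¹) = −re(h * p⁻¹ * a * f⁻¹ * q * f). (Lemma 2.2 of the paper: G = −F, where G = (G₁, G₂) are the earring defining functions and F = (F₂, F₃) the functions used in the earlier paper.) -/

import Mathlib

/-!
Conjugation by the pure unit quaternion `h` negates `im (b * h)`, because `h * b + b * h` is real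
for pure `b`, `h`; hence `h p h⁻¹ = p⁻¹`. Conjugation by `a f⁻¹` and conjugation by `h` both send
`f a⁻¹ h` to `h f a⁻¹`, so they agree on its imaginary part and on `q`. With these two commutation
rules both identities follow by taking quaternionic conjugates, using `re (x * y) = re (y * x)`
and `h * h = -1`.
-/

open Quaternion NormedSpace

namespace Quaternion

theorem re_mul_comm {R : Type*} [CommRing R] (x y : ℍ[R]) : (x * y).re = (y * x).re := by
  simp only [re_mul]; ring

theorem im_mul_anticomm_of_re_eq_zero {R : Type*} [CommRing R] {x y : ℍ[R]} (hx : x.re = 0)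
    (hy : y.re = 0) : (y * x).im = -(x * y).im := by
  ext <;> simp [hx, hy] <;> ring

theorem im_conj {R : Type*} [Field R] [LinearOrder R] [IsStrictOrderedRing R] {u : ℍ[R]}
    (hu : u ≠ 0) (w : ℍ[R]) : (u * w * u⁻¹).im = u * w.im * u⁻¹ := by
  have hre : (u * w * u⁻¹).re = w.re := by
    rw [re_mul_comm, ← mul_assoc, inv_mul_cancel₀ hu, one_mul]
  rw [← sub_re_self, ← sub_re_self w, hre, mul_sub, sub_mul, ← coe_commutes,
    mul_inv_cancel_right₀ hu]

theorem inv_eq_star_of_norm_eq_one {x : ℍ[ℝ]} (hx : ‖x‖ = 1) : x⁻¹ = star x := by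
  rw [inv_def, normSq_eq_norm_mul_self, hx]; simp

theorem inv_eq_neg_of_norm_eq_one {x : ℍ[ℝ]} (hx : ‖x‖ = 1) (hre : x.re = 0) : x⁻¹ = -x := by
  rw [inv_eq_star_of_norm_eq_one hx, star_eq_neg.2 hre]

-- Needed by `NormedSpace.exp_neg`; Mathlib provides no such instance for `ℍ[ℝ]`.
noncomputable instance : NormedAlgebra ℚ ℍ[ℝ] := NormedAlgebra.restrictScalars ℚ ℝ ℍ[ℝ]

theorem star_exp_of_re_eq_zero {x : ℍ[ℝ]} (hx : x.re = 0) : star (exp x) = (exp x)⁻¹ := by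
  rw [star_exp, star_eq_neg.2 hx, exp_neg]

theorem conj_exp_smul_im {u : ℍ[ℝ]} (hu : u ≠ 0) (s : ℝ) (w : ℍ[ℝ]) :
    u * exp (s • w.im) * u⁻¹ = exp (s • (u * w * u⁻¹).im) := by
  rw [← exp_conj _ _ hu, im_conj hu, mul_smul_comm, smul_mul_assoc]

theorem re_eq_neg_re_of_conj {a f h p q : ℍ[ℝ]} (ha : ‖a‖ = 1) (hh : ‖h‖ = 1)
    (hhre : h.re = 0) (hp : star p = p⁻¹) (hq : star q = q⁻¹) (hP : h * p * h⁻¹ = p⁻¹)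
    (hQ : a * f⁻¹ * q * (a * f⁻¹)⁻¹ = h * q * h⁻¹) :
    (h * a⁻¹ * h * q⁻¹ * p⁻¹).re = -(p⁻¹ * a * f⁻¹ * q * f).re ∧
    (a⁻¹ * h * q⁻¹ * p⁻¹).re = -(h * p⁻¹ * a * f⁻¹ * q * f).re := by
  have ha0 : a ≠ 0 := by rintro rfl; simp at ha
  have h0 : h ≠ 0 := by rintro rfl; simp at hh
  have hstar_a : star a = a⁻¹ := (inv_eq_star_of_norm_eq_one ha).symm
  have hstar_h : star h = -h := star_eq_neg.2 hhre
  have hinv_h : h⁻¹ = -h := inv_eq_neg_of_norm_eq_one hh hhre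
  have hsq : h * h = -1 := by rw [← mul_inv_cancel₀ h0, hinv_h, mul_neg, neg_neg]
  have hPh : p⁻¹ * h = h * p := by rw [← hP, inv_mul_cancel_right₀ h0]
  have hQa : a * f⁻¹ * q * f = h * q * h⁻¹ * a := by
    rw [← hQ, mul_inv_rev, inv_inv, mul_assoc _ (f * a⁻¹), inv_mul_cancel_right₀ ha0]
  have hRHS₁ : p⁻¹ * a * f⁻¹ * q * f = -(h * (p * q * h * a)) := by
    simp only [mul_assoc] at hQa ⊢
    rw [hQa, ← mul_assoc p⁻¹ h, hPh, hinv_h]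
    simp only [mul_assoc, neg_mul, mul_neg]
  have hRHS₂ : h * p⁻¹ * a * f⁻¹ * q * f = p * q * h * a := by
    simp only [mul_assoc] at hRHS₁ ⊢
    rw [hRHS₁, mul_neg, ← mul_assoc h h, hsq, neg_one_mul, neg_neg]
  have hLHS₁ : star (h * a⁻¹ * h * q⁻¹ * p⁻¹) = p * q * h * a * h := by
    simp only [star_mul, star_inv₀, hp, hq, hstar_a, hstar_h, inv_inv, neg_mul, mul_neg, neg_neg,
      mul_assoc]
  have hLHS₂ : star (a⁻¹ * h * q⁻¹ * p⁻¹) = -(p * q * h * a) := by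
    simp only [star_mul, star_inv₀, hp, hq, hstar_a, hstar_h, inv_inv, neg_mul, mul_neg, mul_assoc]
  constructor
  · rw [← re_star, hLHS₁, hRHS₁, re_neg, neg_neg, re_mul_comm h]
  · rw [← re_star, hLHS₂, hRHS₂, re_neg]

end Quaternion

theorem G_eq_neg_F_general (s : ℝ) (a b f h : ℍ[ℝ])
    (ha : ‖a‖ = 1) (hf : ‖f‖ = 1) (hh : ‖h‖ = 1)
    (hbre : b.re = 0) (hhre : h.re = 0)
    (p q : ℍ[ℝ])
    (hp : p = NormedSpace.exp (s • Quaternion.im (b * h)))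
    (hq : q = NormedSpace.exp (s • Quaternion.im (f * a⁻¹ * h))) :
    (h * a⁻¹ * h * q⁻¹ * p⁻¹).re = -(p⁻¹ * a * f⁻¹ * q * f).re ∧
    (a⁻¹ * h * q⁻¹ * p⁻¹).re = -(h * p⁻¹ * a * f⁻¹ * q * f).re := by
  have ha0 : a ≠ 0 := by rintro rfl; simp at ha
  have hf0 : f ≠ 0 := by rintro rfl; simp at hf
  have h0 : h ≠ 0 := by rintro rfl; simp at hh
  have hP : h * p * h⁻¹ = p⁻¹ := by
    rw [hp, conj_exp_smul_im h0, ← mul_assoc h b, mul_inv_cancel_right₀ h0,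
      im_mul_anticomm_of_re_eq_zero hbre hhre, smul_neg, exp_neg]
  have hconj : a * f⁻¹ * (f * a⁻¹ * h) * (a * f⁻¹)⁻¹ = h * (f * a⁻¹ * h) * h⁻¹ := by
    simp only [mul_inv_rev, inv_inv, mul_assoc, inv_mul_cancel_left₀ hf0,
      mul_inv_cancel_left₀ ha0, mul_inv_cancel₀ h0, mul_one]
  have hQ : a * f⁻¹ * q * (a * f⁻¹)⁻¹ = h * q * h⁻¹ := by
    rw [hq, conj_exp_smul_im (mul_ne_zero ha0 (inv_ne_zero hf0)), conj_exp_smul_im h0, hconj]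
  exact re_eq_neg_re_of_conj ha hh hhre (hp ▸ star_exp_of_re_eq_zero (by simp))
    (hq ▸ star_exp_of_re_eq_zero (by simp)) hP hQ

/-- Lemma 2.2 of the paper: `G = -F`.  With `p = exp(s·im(b h))` and `q = exp(s·im(f a⁻¹ h))`,
where `a, b, f, h` are unit quaternions with `re b = 0` and `re h = 0`, one has
`re(h a⁻¹ h q⁻¹ p⁻¹) = -re(p⁻¹ a f⁻¹ q f)` and `re(a⁻¹ h q⁻¹ p⁻¹) = -re(h p⁻¹ a f⁻¹ q f)`. -/
theorem G_eq_neg_F (s : ℝ) (a b f h : ℍ[ℝ])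
    (ha : ‖a‖ = 1) (hb : ‖b‖ = 1) (hf : ‖f‖ = 1) (hh : ‖h‖ = 1)
    (hbre : b.re = 0) (hhre : h.re = 0)
    (p q : ℍ[ℝ])
    (hp : p = NormedSpace.exp (s • Quaternion.im (b * h)))
    (hq : q = NormedSpace.exp (s • Quaternion.im (f * a⁻¹ * h))) :
    (h * a⁻¹ * h * q⁻¹ * p⁻¹).re = -(p⁻¹ * a * f⁻¹ * q * f).re ∧
    (a⁻¹ * h * q⁻¹ * p⁻¹).re = -(h * p⁻¹ * a * f⁻¹ * q * f).re :=
  G_eq_neg_F_general s a b f h ha hf hh hbre hhre p q hp hq
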